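/- arXiv:1110.2338 — 2 statements merged into one kernel-verified Lean document; each statement's English description precedes it below -/
import Mathlib

section
/- For all complex numbers s, t, the projective point with homogeneous coordinates (x : y : z : w) = (t² − 1 : i(t² − 1 − 2st) : s(t² + 1) : s(t² − 1) + 4t) satisfies the homogeneous equation (x² + y² + z²)² + (x + iy)²w² − z²w² = 0. -/
/-!
Write `(x : y : z : w)` for the parametrized point. Since `i² = -1`, we get `x + iy = 2st` and
`x² + y² + z² = s(t² - 1) w`, so the equation becomes
`s² w² ((t² - 1)² + (2t)² - (t² + 1)²) = 0`, which holds by the Pythagorean identity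
`(t² - 1)² + (2t)² = (t² + 1)²`.
-/

section CyclideParametrization

variable {R : Type*} [CommRing R] {i : R}

theorem cyclide_param_x_add_i_mul_y (hi : i ^ 2 = -1) (s t : R) :
    (t ^ 2 - 1) + i * (i * (t ^ 2 - 1 - 2 * s * t)) = 2 * s * t := by
  linear_combination (t ^ 2 - 1 - 2 * s * t) * hi

theorem cyclide_param_sum_sq (hi : i ^ 2 = -1) (s t : R) :
    (t ^ 2 - 1) ^ 2 + (i * (t ^ 2 - 1 - 2 * s * t)) ^ 2 + (s * (t ^ 2 + 1)) ^ 2 =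
      s * (t ^ 2 - 1) * (s * (t ^ 2 - 1) + 4 * t) := by
  linear_combination (t ^ 2 - 1 - 2 * s * t) ^ 2 * hi

end CyclideParametrization

open Complex in
theorem cyclide_parametrization (s t : ℂ) :
    ((t ^ 2 - 1) ^ 2 + (I * (t ^ 2 - 1 - 2 * s * t)) ^ 2 + (s * (t ^ 2 + 1)) ^ 2) ^ 2 +
      ((t ^ 2 - 1) + I * (I * (t ^ 2 - 1 - 2 * s * t))) ^ 2 * (s * (t ^ 2 - 1) + 4 * t) ^ 2 -
      (s * (t ^ 2 + 1)) ^ 2 * (s * (t ^ 2 - 1) + 4 * t) ^ 2 = 0 := by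
  rw [cyclide_param_sum_sq I_sq, cyclide_param_x_add_i_mul_y I_sq]
  ring
end

section
/- Two distinct circles in ℝ³ that have exactly two distinct common points are cospherical: there exists a sphere or a plane containing both circles. -/
/-!
If the two circles lie in planes with the same direction, the planes share the common points and
so coincide. Otherwise the two planes meet exactly in the line `pq`, so the centres `c₁`, `c₂`,
both equidistant from `p` and `q`, differ by a vector orthogonal to the intersection of the plane
directions. That orthogonal complement is the sum of the two normal lines, hence the normal lines
through `c₁` and `c₂` meet in a point `o`. Every point of a normal line through a circle's centre
is equidistant from all points of the circle, so `o` is the centre of a sphere through both.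
-/

open Module EuclideanGeometry AffineSubspace

namespace Submodule

theorem orthogonal_inf {𝕜 E : Type*} [RCLike 𝕜] [NormedAddCommGroup E] [InnerProductSpace 𝕜 E]
    [FiniteDimensional 𝕜 E] (K₁ K₂ : Submodule 𝕜 E) : (K₁ ⊓ K₂)ᗮ = K₁ᗮ ⊔ K₂ᗮ := by
  rw [← orthogonal_orthogonal (K₁ᗮ ⊔ K₂ᗮ), ← inf_orthogonal, orthogonal_orthogonal,
    orthogonal_orthogonal]

theorem inf_eq_span_singleton_of_finrank_eq_two {K V : Type*} [DivisionRing K] [AddCommGroup V]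
    [Module K V] {S₁ S₂ : Submodule K V} (h₁ : finrank K S₁ = 2) (h₂ : finrank K S₂ = 2)
    (hne : S₁ ≠ S₂) {v : V} (hv : v ≠ 0) (hv₁ : v ∈ S₁) (hv₂ : v ∈ S₂) :
    S₁ ⊓ S₂ = K ∙ v := by
  have : FiniteDimensional K S₁ := finite_of_finrank_eq_succ h₁
  have : FiniteDimensional K S₂ := finite_of_finrank_eq_succ h₂
  have hlt : finrank K ↥(S₁ ⊓ S₂) < 2 := by
    by_contra! hle
    exact hne <| (eq_of_le_of_finrank_le inf_le_left (h₁ ▸ hle)).symm.trans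
      (eq_of_le_of_finrank_le inf_le_right (h₂ ▸ hle))
  have hle : K ∙ v ≤ S₁ ⊓ S₂ := (span_singleton_le_iff_mem _ _).2 (mem_inf.2 ⟨hv₁, hv₂⟩)
  exact (eq_of_le_of_finrank_le hle (by rw [finrank_span_singleton hv]; omega)).symm

end Submodule

namespace EuclideanGeometry

variable {V P : Type*} [NormedAddCommGroup V] [InnerProductSpace ℝ V] [MetricSpace P]
  [NormedAddTorsor V P]

theorem dist_eq_dist_of_vsub_mem_direction_orthogonal {s : AffineSubspace ℝ P} {c o x y : P}
    (ho : o -ᵥ c ∈ s.directionᗮ) (hx : x ∈ s) (hy : y ∈ s) (h : dist x c = dist y c) :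
    dist x o = dist y o := by
  rw [← mem_perpBisector_iff_dist_eq'] at h ⊢
  have hdir : o -ᵥ c ∈ (perpBisector x y).direction := by
    rw [direction_perpBisector]
    exact Submodule.orthogonal_le
      ((Submodule.span_singleton_le_iff_mem _ _).2 (vsub_mem_direction hy hx)) ho
  simpa using vadd_mem_of_mem_direction hdir h

theorem subset_sphere_of_vsub_mem_direction_orthogonal {s : AffineSubspace ℝ P} {c o p : P}
    {r : ℝ} (ho : o -ᵥ c ∈ s.directionᗮ) (hp : p ∈ s ∧ dist p c = r) :
    {x | x ∈ s ∧ dist x c = r} ⊆ Metric.sphere o (dist p o) :=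
  fun _ hx ↦ dist_eq_dist_of_vsub_mem_direction_orthogonal ho hx.1 hp.1 (hx.2.trans hp.2.symm)

theorem exists_vsub_mem_orthogonal_of_vsub_mem_orthogonal_inf [FiniteDimensional ℝ V]
    {K₁ K₂ : Submodule ℝ V} {c₁ c₂ : P} (h : c₂ -ᵥ c₁ ∈ (K₁ ⊓ K₂)ᗮ) :
    ∃ o : P, o -ᵥ c₁ ∈ K₁ᗮ ∧ o -ᵥ c₂ ∈ K₂ᗮ := by
  rw [Submodule.orthogonal_inf] at h
  obtain ⟨u₁, hu₁, u₂, hu₂, hu⟩ := Submodule.mem_sup.1 h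
  refine ⟨u₁ +ᵥ c₁, by simpa using hu₁, ?_⟩
  rw [vadd_vsub_assoc, ← neg_vsub_eq_vsub_rev, ← hu, neg_add, add_neg_cancel_left]
  exact K₂ᗮ.neg_mem hu₂

theorem exists_vsub_mem_direction_orthogonal_of_dist_eq [FiniteDimensional ℝ V]
    {s₁ s₂ : AffineSubspace ℝ P} (h₁ : finrank ℝ s₁.direction = 2)
    (h₂ : finrank ℝ s₂.direction = 2) (hne : s₁.direction ≠ s₂.direction) {c₁ c₂ p q : P}
    (hpq : p ≠ q) (hp₁ : p ∈ s₁) (hq₁ : q ∈ s₁) (hp₂ : p ∈ s₂) (hq₂ : q ∈ s₂)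
    (hc₁ : dist p c₁ = dist q c₁) (hc₂ : dist p c₂ = dist q c₂) :
    ∃ o : P, o -ᵥ c₁ ∈ s₁.directionᗮ ∧ o -ᵥ c₂ ∈ s₂.directionᗮ := by
  apply exists_vsub_mem_orthogonal_of_vsub_mem_orthogonal_inf
  rw [Submodule.inf_eq_span_singleton_of_finrank_eq_two h₁ h₂ hne (vsub_ne_zero.2 hpq.symm)
    (vsub_mem_direction hq₁ hp₁) (vsub_mem_direction hq₂ hp₂),
    Submodule.mem_orthogonal_singleton_iff_inner_left]
  exact inner_vsub_vsub_of_dist_eq_of_dist_eq hc₁ hc₂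

end EuclideanGeometry

theorem two_circles_with_two_common_points_cospherical_general
    (c₁ c₂ : EuclideanSpace ℝ (Fin 3)) (r₁ r₂ : ℝ)
    (P₁ P₂ : AffineSubspace ℝ (EuclideanSpace ℝ (Fin 3)))
    (hP₁ : Module.finrank ℝ P₁.direction = 2)
    (hP₂ : Module.finrank ℝ P₂.direction = 2)
    (C₁ C₂ : Set (EuclideanSpace ℝ (Fin 3)))
    (hC₁ : C₁ = {p | p ∈ P₁ ∧ dist p c₁ = r₁})
    (hC₂ : C₂ = {p | p ∈ P₂ ∧ dist p c₂ = r₂})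
    (p q : EuclideanSpace ℝ (Fin 3)) (hpq : p ≠ q)
    (hint : C₁ ∩ C₂ = {p, q}) :
    (∃ (o : EuclideanSpace ℝ (Fin 3)) (R : ℝ), 0 < R ∧
        C₁ ∪ C₂ ⊆ Metric.sphere o R) ∨
    (∃ Q : AffineSubspace ℝ (EuclideanSpace ℝ (Fin 3)),
        Module.finrank ℝ Q.direction = 2 ∧ C₁ ∪ C₂ ⊆ (Q : Set (EuclideanSpace ℝ (Fin 3)))) := by
  obtain ⟨⟨hp₁, hp₂⟩, hq₁, hq₂⟩ : p ∈ C₁ ∩ C₂ ∧ q ∈ C₁ ∩ C₂ := by simp [hint]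
  subst hC₁ hC₂
  by_cases hdir : P₁.direction = P₂.direction
  · have hP : P₁ = P₂ := ext_of_direction_eq hdir ⟨p, hp₁.1, hp₂.1⟩
    subst hP
    exact Or.inr ⟨P₁, hP₁, Set.union_subset (fun _ hx ↦ hx.1) (fun _ hx ↦ hx.1)⟩
  · obtain ⟨o, ho₁, ho₂⟩ := exists_vsub_mem_direction_orthogonal_of_dist_eq hP₁ hP₂ hdir hpq
      hp₁.1 hq₁.1 hp₂.1 hq₂.1 (hp₁.2.trans hq₁.2.symm) (hp₂.2.trans hq₂.2.symm)
    have hC₁o := subset_sphere_of_vsub_mem_direction_orthogonal ho₁ hp₁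
    refine Or.inl ⟨o, dist p o, dist_pos.2 fun hpo ↦ hpq ?_, Set.union_subset hC₁o
      (subset_sphere_of_vsub_mem_direction_orthogonal ho₂ hp₂)⟩
    have hqo : dist q o = 0 := by simpa [hpo] using hC₁o hq₁
    rw [hpo, dist_eq_zero.1 hqo]

/-- Two distinct circles in ℝ³ with exactly two common points are cospherical:
some sphere or plane contains both. -/
theorem two_circles_with_two_common_points_cospherical
    (c₁ c₂ : EuclideanSpace ℝ (Fin 3)) (r₁ r₂ : ℝ) (hr₁ : 0 < r₁) (hr₂ : 0 < r₂)
    (P₁ P₂ : AffineSubspace ℝ (EuclideanSpace ℝ (Fin 3)))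
    (hP₁ : Module.finrank ℝ P₁.direction = 2)
    (hP₂ : Module.finrank ℝ P₂.direction = 2)
    (hc₁ : c₁ ∈ P₁) (hc₂ : c₂ ∈ P₂)
    (C₁ C₂ : Set (EuclideanSpace ℝ (Fin 3)))
    (hC₁ : C₁ = {p | p ∈ P₁ ∧ dist p c₁ = r₁})
    (hC₂ : C₂ = {p | p ∈ P₂ ∧ dist p c₂ = r₂})
    (hne : C₁ ≠ C₂)
    (p q : EuclideanSpace ℝ (Fin 3)) (hpq : p ≠ q)
    (hint : C₁ ∩ C₂ = {p, q}) :
    (∃ (o : EuclideanSpace ℝ (Fin 3)) (R : ℝ), 0 < R ∧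
        C₁ ∪ C₂ ⊆ Metric.sphere o R) ∨
    (∃ Q : AffineSubspace ℝ (EuclideanSpace ℝ (Fin 3)),
        Module.finrank ℝ Q.direction = 2 ∧ C₁ ∪ C₂ ⊆ (Q : Set (EuclideanSpace ℝ (Fin 3)))) :=
  two_circles_with_two_common_points_cospherical_general c₁ c₂ r₁ r₂ P₁ P₂ hP₁ hP₂ C₁ C₂ hC₁ hC₂ p q
    hpq hint
end
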